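/- arXiv:2504.13663 — 2 statements merged into one kernel-verified Lean document; each statement's English description precedes it below -/
import Mathlib

section
/- Let K be a nonempty set and X a real Banach space. A function f ∈ ℓ∞(K,X) with ‖f‖ = 1 is a (ρ₊)-left symmetric point of ℓ∞(K,X) if and only if both of the following hold: (i) there exists k₀ ∈ K such that ‖f(k₀)‖ = 1 and f(k) = 0 for all k ∈ K with k ≠ k₀, and (ii) f(k₀) is a (ρ₊)-left symmetric point of X. -/
/-!
In `ℓ∞(K, X)` one has `‖h‖ = max ‖h k₀‖ S`, where `S` is the supremum of `‖h k‖` over `k ≠ k₀`.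
If `f` has a nonzero coordinate `f k₀` while `S = ‖f‖`, then `g = single k₀ (-f k₀)` leaves
`‖f + t g‖ = ‖f‖` for small `t > 0`, so `ρ'₊(f, g) = 0`, whereas `ρ'₊(g, f) = ρ'₊(-f k₀, f k₀) =
-‖f k₀‖² ≠ 0`. Hence a left symmetric `f` is supported at a single point `k₀` with `‖f k₀‖ = 1`.

Conversely, for such `f` and `t ≥ 0`, `‖f + t g‖ = ‖f k₀ + t g k₀‖` when `t` is small and
`‖g + t f‖ = max ‖g k₀ + t f k₀‖ S`. So `ρ'₊(f, g) = ρ'₊(f k₀, g k₀)`, and a vanishing right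
derivative of `t ↦ ‖g k₀ + t f k₀‖` passes to `t ↦ ‖g + t f‖` because `max · S` is 1-Lipschitz.
The right derivatives exist since `t ↦ ‖a + t b‖` is convex.
-/

open Filter Topology Set Metric NormedSpace
open scoped ENNReal

noncomputable section

/-- Birkhoff–James orthogonality: `x ⊥_B y` iff `‖x + t • y‖ ≥ ‖x‖` for all real `t`. -/
def BJOrth {E : Type*} [NormedAddCommGroup E] [NormedSpace ℝ E] (x y : E) : Prop :=
  ∀ t : ℝ, ‖x‖ ≤ ‖x + t • y‖

/-- The norm derivative `ρ'₊(x,y) = ‖x‖ · lim_{t→0⁺} (‖x+ty‖-‖x‖)/t`. -/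
def rhoPlus {E : Type*} [NormedAddCommGroup E] [NormedSpace ℝ E] (x y : E) : ℝ :=
  ‖x‖ * limUnder (𝓝[>] (0 : ℝ)) (fun t => (‖x + t • y‖ - ‖x‖) / t)

/-- The norm derivative `ρ'₋(x,y) = ‖x‖ · lim_{t→0⁻} (‖x+ty‖-‖x‖)/t`. -/
def rhoMinus {E : Type*} [NormedAddCommGroup E] [NormedSpace ℝ E] (x y : E) : ℝ :=
  ‖x‖ * limUnder (𝓝[<] (0 : ℝ)) (fun t => (‖x + t • y‖ - ‖x‖) / t)

/-- The norm derivative `ρ'(x,y) = (ρ'₊(x,y) + ρ'₋(x,y))/2`. -/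
def rhoDer {E : Type*} [NormedAddCommGroup E] [NormedSpace ℝ E] (x y : E) : ℝ :=
  (rhoPlus x y + rhoMinus x y) / 2

/-- `x` is an exposed point of the closed unit ball of `E`: there is a norm-one functional `f`
with `f x = 1` and `f u < 1` for every `u` in the ball with `u ≠ x`. -/
def ExposedPt {E : Type*} [NormedAddCommGroup E] [NormedSpace ℝ E] (x : E) : Prop :=
  ‖x‖ ≤ 1 ∧ ∃ f : E →L[ℝ] ℝ, ‖f‖ = 1 ∧ f x = 1 ∧ ∀ u : E, ‖u‖ ≤ 1 → u ≠ x → f u < 1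

section NormDerivative

variable {E F : Type*} [NormedAddCommGroup E] [NormedSpace ℝ E]
  [NormedAddCommGroup F] [NormedSpace ℝ F]

theorem rhoPlus_eq_of_tendsto {x y : E} {L : ℝ}
    (h : Tendsto (fun t : ℝ => (‖x + t • y‖ - ‖x‖) / t) (𝓝[>] 0) (𝓝 L)) :
    rhoPlus x y = ‖x‖ * L := by
  rw [rhoPlus, h.limUnder_eq]

theorem convexOn_norm_add_smul (x y : E) : ConvexOn ℝ univ (fun t : ℝ => ‖x + t • y‖) := by
  have := (convexOn_univ_norm (E := E)).comp_affineMap (AffineMap.lineMap x (x + y))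
  simpa [Function.comp_def, AffineMap.lineMap_apply_module', add_comm] using this

theorem exists_tendsto_rhoPlus_quotient (x y : E) :
    ∃ L, Tendsto (fun t : ℝ => (‖x + t • y‖ - ‖x‖) / t) (𝓝[>] 0) (𝓝 L) := by
  have hL := (convexOn_norm_add_smul x y).hasDerivWithinAt_rightDeriv_of_mem_interior
    (x := 0) (by simp)
  refine ⟨derivWithin (fun t : ℝ => ‖x + t • y‖) (Ioi 0) 0, ?_⟩
  convert hasDerivWithinAt_iff_tendsto_slope.1 hL using 1
  · ext t
    simp [slope_def_field]
  · simp

theorem rhoPlus_eq_zero_of_eventually_norm_eq {x y : E}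
    (h : ∀ᶠ t in 𝓝[>] (0 : ℝ), ‖x + t • y‖ = ‖x‖) : rhoPlus x y = 0 := by
  refine (rhoPlus_eq_of_tendsto (L := 0) (tendsto_const_nhds.congr' ?_)).trans (mul_zero _)
  filter_upwards [h] with t ht
  rw [ht, sub_self, zero_div]

theorem rhoPlus_congr {u v : E} {x y : F} (hn : ‖u‖ = ‖x‖)
    (h : ∀ᶠ t in 𝓝[>] (0 : ℝ), ‖u + t • v‖ = ‖x + t • y‖) : rhoPlus u v = rhoPlus x y := by
  rw [rhoPlus, rhoPlus, hn, limUnder, limUnder,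
    Filter.map_congr (m₂ := fun t => (‖x + t • y‖ - ‖x‖) / t) (h.mono fun t ht => by rw [ht])]

theorem rhoPlus_neg_self (x : E) : rhoPlus (-x) x = -‖x‖ ^ 2 := by
  have h : ∀ᶠ t in 𝓝[>] (0 : ℝ), -‖x‖ = (‖-x + t • x‖ - ‖-x‖) / t := by
    filter_upwards [Ioo_mem_nhdsGT one_pos] with t ⟨ht0, ht1⟩
    rw [show -x + t • x = (1 - t) • -x by module, norm_smul, Real.norm_of_nonneg (by linarith),
      norm_neg]
    field_simp
    ring
  rw [rhoPlus_eq_of_tendsto (tendsto_const_nhds.congr' h), norm_neg]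
  ring

theorem rhoPlus_eq_zero_of_norm_eq_max {u v : E} {a b : F} {S : ℝ}
    (h : ∀ t : ℝ, 0 ≤ t → ‖u + t • v‖ = max ‖a + t • b‖ S) (hab : rhoPlus a b = 0) :
    rhoPlus u v = 0 := by
  have hu : ‖u‖ = max ‖a‖ S := by simpa using h 0 le_rfl
  rcases eq_or_ne a 0 with rfl | ha
  · rcases le_or_gt S 0 with hS | hS
    · rw [rhoPlus, hu, norm_zero, max_eq_left hS, zero_mul]
    apply rhoPlus_eq_zero_of_eventually_norm_eq
    have hsmall : ∀ᶠ t in 𝓝[>] (0 : ℝ), ‖t • b‖ < S :=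
      (((continuous_id.smul continuous_const).norm.tendsto' 0 0 (by simp)).eventually
        (gt_mem_nhds hS)).filter_mono nhdsWithin_le_nhds
    filter_upwards [hsmall, self_mem_nhdsWithin] with t ht ht0
    rw [h t (le_of_lt ht0), hu, zero_add, norm_zero, max_eq_right ht.le, max_eq_right hS.le]
  · obtain ⟨L, hL⟩ := exists_tendsto_rhoPlus_quotient a b
    obtain rfl : L = 0 := by
      rw [rhoPlus_eq_of_tendsto hL] at hab
      exact (mul_eq_zero.1 hab).resolve_left (norm_ne_zero_iff.2 ha)
    refine (rhoPlus_eq_of_tendsto (L := 0) (squeeze_zero_norm' ?_ (by simpa using hL.norm))).trans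
      (mul_zero _)
    -- `max · S` is 1-Lipschitz, so the quotient for `u` is dominated by the one for `a`
    filter_upwards [self_mem_nhdsWithin] with t ht
    simp only [norm_div, Real.norm_eq_abs, h t (le_of_lt ht), hu]
    exact div_le_div_of_nonneg_right (abs_max_sub_max_le_abs _ _ _) (abs_nonneg t)

theorem rhoPlus_eq_of_norm_eq_max_mul {u v : E} {a b : F} {S : ℝ} (ha : a ≠ 0)
    (h : ∀ t : ℝ, 0 ≤ t → ‖u + t • v‖ = max ‖a + t • b‖ (t * S)) : rhoPlus u v = rhoPlus a b := by
  refine rhoPlus_congr (by simpa using h 0 le_rfl) ?_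
  have hgap : ∀ᶠ t in 𝓝[>] (0 : ℝ), t * S < ‖a + t • b‖ := by
    have hcont : Continuous (fun t : ℝ => ‖a + t • b‖ - t * S) := by fun_prop
    filter_upwards [((hcont.tendsto' 0 ‖a‖ (by simp)).eventually
      (lt_mem_nhds (norm_pos_iff.2 ha))).filter_mono nhdsWithin_le_nhds] with t ht
    linarith
  filter_upwards [hgap, self_mem_nhdsWithin] with t ht ht0
  rw [h t (le_of_lt ht0), max_eq_left ht.le]

end NormDerivative

section LInfty

variable {K : Type*} {E : K → Type*} [∀ k, NormedAddCommGroup (E k)]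

def offSupNorm (h : lp E ∞) (k₀ : K) : ℝ := ⨆ k : {k // k ≠ k₀}, ‖h k‖

theorem norm_apply_le_offSupNorm (h : lp E ∞) {k₀ k : K} (hk : k ≠ k₀) :
    ‖h k‖ ≤ offSupNorm h k₀ :=
  le_ciSup (f := fun k : {k // k ≠ k₀} => ‖h k‖)
    ⟨‖h‖, by rintro _ ⟨j, rfl⟩; exact lp.norm_apply_le_norm ENNReal.top_ne_zero h j⟩ ⟨k, hk⟩

theorem offSupNorm_le (h : lp E ∞) (k₀ : K) {C : ℝ} (hC : 0 ≤ C)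
    (hle : ∀ k, k ≠ k₀ → ‖h k‖ ≤ C) : offSupNorm h k₀ ≤ C :=
  Real.iSup_le (fun k => hle k k.2) hC

theorem offSupNorm_eq_zero_of_supported {h : lp E ∞} {k₀ : K} (hh : ∀ k, k ≠ k₀ → h k = 0) :
    offSupNorm h k₀ = 0 :=
  (offSupNorm_le h k₀ le_rfl fun k hk => by rw [hh k hk, norm_zero]).antisymm
    (Real.iSup_nonneg fun _ => norm_nonneg _)

theorem offSupNorm_add_of_supported (u : lp E ∞) {v : lp E ∞} {k₀ : K}
    (hv : ∀ k, k ≠ k₀ → v k = 0) : offSupNorm (u + v) k₀ = offSupNorm u k₀ := by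
  refine iSup_congr fun k => ?_
  rw [lp.coeFn_add, Pi.add_apply, hv k k.2, add_zero]

theorem offSupNorm_le_norm (h : lp E ∞) (k₀ : K) : offSupNorm h k₀ ≤ ‖h‖ :=
  offSupNorm_le h k₀ (norm_nonneg h) fun k _ => lp.norm_apply_le_norm ENNReal.top_ne_zero h k

theorem norm_eq_max_offSupNorm (h : lp E ∞) (k₀ : K) :
    ‖h‖ = max ‖h k₀‖ (offSupNorm h k₀) := by
  refine le_antisymm (lp.norm_le_of_forall_le (le_max_of_le_left (norm_nonneg _)) fun k => ?_)
    (max_le (lp.norm_apply_le_norm ENNReal.top_ne_zero h k₀) (offSupNorm_le_norm h k₀))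
  rcases eq_or_ne k k₀ with rfl | hk
  · exact le_max_left _ _
  · exact le_max_of_le_right (norm_apply_le_offSupNorm h hk)

theorem exists_supported_of_offSupNorm_lt {f : lp E ∞} (hf : f ≠ 0)
    (h : ∀ k, f k ≠ 0 → offSupNorm f k < ‖f‖) :
    ∃ k₀, ‖f k₀‖ = ‖f‖ ∧ ∀ k, k ≠ k₀ → f k = 0 := by
  obtain ⟨k₀, hk₀⟩ : ∃ k₀, f k₀ ≠ 0 := by
    by_contra! hzero
    exact hf (lp.ext (funext hzero))
  have hnorm : ‖f k₀‖ = ‖f‖ := by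
    have := norm_eq_max_offSupNorm f k₀
    rcases max_choice ‖f k₀‖ (offSupNorm f k₀) with hmax | hmax
    · rw [this, hmax]
    · exact absurd (this.trans hmax).symm (h k₀ hk₀).ne
  refine ⟨k₀, hnorm, fun k hk => ?_⟩
  by_contra hfk
  exact (h k hfk).not_ge (hnorm ▸ norm_apply_le_offSupNorm f (Ne.symm hk))

variable [∀ k, NormedSpace ℝ (E k)]

theorem offSupNorm_smul (t : ℝ) (h : lp E ∞) (k₀ : K) :
    offSupNorm (t • h) k₀ = |t| * offSupNorm h k₀ := by
  rw [offSupNorm, offSupNorm, Real.mul_iSup_of_nonneg (abs_nonneg t)]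
  refine iSup_congr fun k => ?_
  rw [lp.coeFn_smul, Pi.smul_apply, norm_smul, Real.norm_eq_abs]

theorem norm_add_smul_of_supported_right (u : lp E ∞) {v : lp E ∞} {k₀ : K}
    (hv : ∀ k, k ≠ k₀ → v k = 0) (t : ℝ) :
    ‖u + t • v‖ = max ‖u k₀ + t • v k₀‖ (offSupNorm u k₀) := by
  have htv : ∀ k, k ≠ k₀ → (t • v) k = 0 := fun k hk => by simp [hv k hk]
  rw [norm_eq_max_offSupNorm _ k₀, offSupNorm_add_of_supported u htv]
  rfl

theorem norm_add_smul_of_supported_left {u : lp E ∞} (v : lp E ∞) {k₀ : K}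
    (hu : ∀ k, k ≠ k₀ → u k = 0) {t : ℝ} (ht : 0 ≤ t) :
    ‖u + t • v‖ = max ‖u k₀ + t • v k₀‖ (t * offSupNorm v k₀) := by
  rw [norm_eq_max_offSupNorm _ k₀, add_comm u, offSupNorm_add_of_supported _ hu,
    offSupNorm_smul, abs_of_nonneg ht, add_comm]
  rfl

theorem rhoPlus_of_supported {u v : lp E ∞} {k₀ : K} (hu : ∀ k, k ≠ k₀ → u k = 0)
    (hv : ∀ k, k ≠ k₀ → v k = 0) : rhoPlus u v = rhoPlus (u k₀) (v k₀) := by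
  have h : ∀ t : ℝ, 0 ≤ t → ‖u + t • v‖ = ‖u k₀ + t • v k₀‖ := fun t ht => by
    rw [norm_add_smul_of_supported_left v hu ht, offSupNorm_eq_zero_of_supported hv, mul_zero,
      max_eq_left (norm_nonneg _)]
  exact rhoPlus_congr (by simpa using h 0 le_rfl)
    (eventually_mem_nhdsWithin.mono fun t ht => h t (le_of_lt ht))

theorem exists_rhoPlus_eq_zero_rhoPlus_ne_zero [DecidableEq K] {f : lp E ∞} {k₀ : K}
    (hk₀ : f k₀ ≠ 0) (hf : offSupNorm f k₀ = ‖f‖) :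
    ∃ g : lp E ∞, rhoPlus f g = 0 ∧ rhoPlus g f ≠ 0 := by
  set g := lp.single ∞ k₀ (-f k₀)
  have hg : ∀ k, k ≠ k₀ → g k = 0 := fun k hk => lp.single_apply_ne ∞ k₀ _ hk
  have hgk₀ : g k₀ = -f k₀ := lp.single_apply_self ∞ k₀ _
  refine ⟨g, rhoPlus_eq_zero_of_eventually_norm_eq ?_, ?_⟩
  · filter_upwards [Ioo_mem_nhdsGT one_pos] with t ⟨ht0, ht1⟩
    rw [norm_add_smul_of_supported_right f hg, hgk₀, hf,
      show f k₀ + t • -f k₀ = (1 - t) • f k₀ by module, norm_smul,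
      Real.norm_of_nonneg (by linarith), max_eq_right]
    calc (1 - t) * ‖f k₀‖ ≤ ‖f k₀‖ := by nlinarith [norm_nonneg (f k₀)]
      _ ≤ ‖f‖ := lp.norm_apply_le_norm ENNReal.top_ne_zero f k₀
  · rw [rhoPlus_eq_of_norm_eq_max_mul (neg_ne_zero.2 hk₀) fun t ht => by
      rw [norm_add_smul_of_supported_left f hg ht, hgk₀], rhoPlus_neg_self]
    exact neg_ne_zero.2 (pow_ne_zero 2 (norm_ne_zero_iff.2 hk₀))

end LInfty

theorem stmt11_general {K : Type*} {X : Type*}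
    [NormedAddCommGroup X] [NormedSpace ℝ X]
    (f : lp (fun _ : K => X) ∞) (hf : ‖f‖ = 1) :
    (∀ g : lp (fun _ : K => X) ∞, rhoPlus f g = 0 → rhoPlus g f = 0) ↔
      (∃ k₀ : K, ‖f k₀‖ = 1 ∧ (∀ k : K, k ≠ k₀ → f k = 0) ∧
        (∀ y : X, rhoPlus (f k₀) y = 0 → rhoPlus y (f k₀) = 0)) := by
  classical
  constructor
  · intro hsym
    have hlt : ∀ k, f k ≠ 0 → offSupNorm f k < ‖f‖ := fun k hk =>
      (offSupNorm_le_norm f k).lt_of_ne fun hS => by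
        obtain ⟨g, hfg, hgf⟩ := exists_rhoPlus_eq_zero_rhoPlus_ne_zero hk hS
        exact hgf (hsym g hfg)
    obtain ⟨k₀, hk₀, hsupp⟩ := exists_supported_of_offSupNorm_lt (by rintro rfl; simp at hf) hlt
    refine ⟨k₀, hk₀.trans hf, hsupp, fun y hy => ?_⟩
    have hy' : ∀ k, k ≠ k₀ → lp.single (E := fun _ : K => X) ∞ k₀ y k = 0 := fun k hk =>
      lp.single_apply_ne (E := fun _ : K => X) ∞ k₀ y hk
    have hsingle := hsym (lp.single ∞ k₀ y)
    rw [rhoPlus_of_supported hsupp hy', rhoPlus_of_supported hy' hsupp,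
      lp.single_apply_self] at hsingle
    exact hsingle hy
  · rintro ⟨k₀, hk₀, hsupp, hsym⟩ g hfg
    have hx : f k₀ ≠ 0 := norm_ne_zero_iff.1 (by rw [hk₀]; exact one_ne_zero)
    rw [rhoPlus_eq_of_norm_eq_max_mul hx fun t ht =>
      norm_add_smul_of_supported_left g hsupp ht] at hfg
    exact rhoPlus_eq_zero_of_norm_eq_max (fun t _ => norm_add_smul_of_supported_right g hsupp t)
      (hsym _ hfg)

theorem stmt11 {K : Type*} [Nonempty K] {X : Type*}
    [NormedAddCommGroup X] [NormedSpace ℝ X] [CompleteSpace X]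
    (f : lp (fun _ : K => X) ∞) (hf : ‖f‖ = 1) :
    (∀ g : lp (fun _ : K => X) ∞, rhoPlus f g = 0 → rhoPlus g f = 0) ↔
      (∃ k₀ : K, ‖f k₀‖ = 1 ∧ (∀ k : K, k ≠ k₀ → f k = 0) ∧
        (∀ y : X, rhoPlus (f k₀) y = 0 → rhoPlus y (f k₀) = 0)) :=
  stmt11_general f hf
end
end

section
/- Let K be a compact, perfectly normal topological space and X a real Banach space. A function f ∈ C(K,X) with ‖f‖ = 1 is a (ρ₊)-right symmetric point of C(K,X) if and only if exactly one of the following holds: (i) M_f = {k₀} for some k₀ ∈ K, the vector f(k₀) is a (ρ₊)-right symmetric point of X, and for every k ∈ K with k ≠ k₀, the only w ∈ X with w ⊥_{ρ₊} f(k) is w = 0; (ii) M_f contains at least two points and for every k ∈ K, the only w ∈ X with w ⊥_{ρ₊} f(k) is w = 0. -/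
open Filter Topology Set Metric NormedSpace

noncomputable section

/-
`ρ'₊(x, y) = ‖x‖ · D(x, y)`, where `D(x, y)` is the right derivative of `t ↦ ‖x + t • y‖` at `0`,
the infimum of its monotone difference quotients. In `C(K, X)`, `D(g, f) = D(g k, f k)` at some
`k` with `‖g k‖ = ‖g‖`: take a cluster point, as `t → 0⁺`, of points where `g + t • f` attains
its norm. So if `g` attains its norm only at `k₀`, then `ρ'₊(g, f) = ρ'₊(g k₀, f k₀)`.

Perfect normality makes every point the exact peak set of a continuous `u : K → [0, 1]`, so every
`w ∈ X` is the value at `k` of a function attaining its norm only at `k`. If `w ≠ 0`, `w ⊥ f(k)`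
and `f` attains its norm at some `k₁ ≠ k`, adding a small positive multiple of `f` near `k₁`
gives `g` with `g ⊥ f` but `ρ'₊(f, g) ≥ c‖f‖² > 0`. The same functions transfer right symmetry
from `f` to `f(k₀)` when `M_f = {k₀}`. Conversely, if `g ⊥ f` then `g(k) ⊥ f(k)` at a point
where `g` attains its norm, and the conditions force `g(k) = 0` (so `g = 0`) or `k = k₀`.
-/

section NormedSpace

variable {E : Type*} [NormedAddCommGroup E] [NormedSpace ℝ E]

def IsRhoPlusRightSymmetric (x : E) : Prop :=
  ∀ y, rhoPlus y x = 0 → rhoPlus x y = 0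

def normSlope (x y : E) (t : ℝ) : ℝ := (‖x + t • y‖ - ‖x‖) / t

-- Slopes from `(0, r)` of the convex function `t ↦ ‖x + t • y‖`, which is `≤ r` at `0`.
theorem monotoneOn_norm_add_smul_sub_div {x : E} {r : ℝ} (hr : ‖x‖ ≤ r) (y : E) :
    MonotoneOn (fun t : ℝ => (‖x + t • y‖ - r) / t) (Ioi 0) := by
  intro s (hs : 0 < s) t (ht : 0 < t) hst
  have hconv : t * ‖x + s • y‖ ≤ (t - s) * ‖x‖ + s * ‖x + t • y‖ :=
    calc t * ‖x + s • y‖ = ‖t • (x + s • y)‖ := by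
          rw [norm_smul, Real.norm_of_nonneg ht.le]
      _ = ‖(t - s) • x + s • (x + t • y)‖ := by congr 1; module
      _ ≤ ‖(t - s) • x‖ + ‖s • (x + t • y)‖ := norm_add_le _ _
      _ = (t - s) * ‖x‖ + s * ‖x + t • y‖ := by
          rw [norm_smul, norm_smul, Real.norm_of_nonneg (sub_nonneg.2 hst),
            Real.norm_of_nonneg hs.le]
  rw [div_le_div_iff₀ hs ht]
  nlinarith [mul_le_mul_of_nonneg_left hr (sub_nonneg.2 hst)]

theorem normSlope_monotoneOn (x y : E) : MonotoneOn (normSlope x y) (Ioi 0) :=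
  monotoneOn_norm_add_smul_sub_div le_rfl y

theorem neg_norm_le_normSlope (x y : E) {t : ℝ} (ht : 0 < t) : -‖y‖ ≤ normSlope x y t := by
  rw [normSlope, le_div_iff₀ ht]
  have h := norm_add_le (x + t • y) (-(t • y))
  rw [add_neg_cancel_right, norm_neg, norm_smul, Real.norm_of_nonneg ht.le] at h
  linarith

theorem bddBelow_normSlope (x y : E) : BddBelow (normSlope x y '' Ioi 0) :=
  ⟨-‖y‖, by rintro _ ⟨t, ht, rfl⟩; exact neg_norm_le_normSlope x y ht⟩

def normRightDeriv (x y : E) : ℝ := sInf (normSlope x y '' Ioi 0)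

theorem normRightDeriv_le_normSlope (x y : E) {t : ℝ} (ht : 0 < t) :
    normRightDeriv x y ≤ normSlope x y t :=
  csInf_le (bddBelow_normSlope x y) ⟨t, ht, rfl⟩

theorem le_normRightDeriv (x y : E) {c : ℝ} (h : ∀ t, 0 < t → c ≤ normSlope x y t) :
    c ≤ normRightDeriv x y :=
  le_csInf ⟨_, 1, mem_Ioi.2 one_pos, rfl⟩ (by rintro _ ⟨t, ht, rfl⟩; exact h t ht)

theorem rhoPlus_eq_mul_normRightDeriv (x y : E) : rhoPlus x y = ‖x‖ * normRightDeriv x y :=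
  congrArg (‖x‖ * ·)
    ((normSlope_monotoneOn x y).tendsto_nhdsGT (bddBelow_normSlope x y)).limUnder_eq

theorem rhoPlus_smul_self (x : E) {c : ℝ} (hc : 0 ≤ c) : rhoPlus x (c • x) = c * ‖x‖ ^ 2 := by
  have hslope : EqOn (normSlope x (c • x)) (fun _ => c * ‖x‖) (Ioi 0) := by
    intro t (ht : 0 < t)
    have hpos : 0 ≤ 1 + t * c := by positivity
    have hx : x + (t * c) • x = (1 + t * c) • x := by module
    rw [normSlope, smul_smul, hx, norm_smul, Real.norm_of_nonneg hpos]
    field_simp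
    ring
  rw [rhoPlus_eq_mul_normRightDeriv, normRightDeriv, hslope.image_eq,
    (nonempty_Ioi : (Ioi (0 : ℝ)).Nonempty).image_const, csInf_singleton]
  ring

theorem rhoPlus_zero_right (x : E) : rhoPlus x 0 = 0 := by
  simpa using rhoPlus_smul_self x le_rfl

end NormedSpace

namespace ContinuousMap

variable {K X : Type*} [TopologicalSpace K] [CompactSpace K] [NormedAddCommGroup X]

theorem exists_norm_apply_eq_norm [Nonempty K] (g : C(K, X)) : ∃ k, ‖g k‖ = ‖g‖ := by
  obtain ⟨k, -, hk⟩ := isCompact_univ.exists_isMaxOn univ_nonempty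
    (continuous_norm.comp g.continuous).continuousOn
  exact ⟨k, le_antisymm (g.norm_coe_le_norm k)
    ((g.norm_le (norm_nonneg _)).2 fun k' => hk (mem_univ k'))⟩

theorem eq_of_norm_apply_eq_norm {g : C(K, X)} {k₀ : K} (hlt : ∀ k ≠ k₀, ‖g k‖ < ‖g k₀‖)
    {k : K} (hk : ‖g k‖ = ‖g‖) : k = k₀ := by
  by_contra hne
  linarith [hlt k hne, g.norm_coe_le_norm k₀]

variable [NormedSpace ℝ X]

theorem normRightDeriv_apply_le (g f : C(K, X)) {k : K} (hk : ‖g k‖ = ‖g‖) :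
    normRightDeriv (g k) (f k) ≤ normRightDeriv g f :=
  le_normRightDeriv g f fun t ht => (normRightDeriv_le_normSlope _ _ ht).trans <| by
    rw [normSlope, normSlope, hk]
    gcongr
    exact (g + t • f).norm_coe_le_norm k

theorem rhoPlus_apply_le (g f : C(K, X)) {k : K} (hk : ‖g k‖ = ‖g‖) :
    rhoPlus (g k) (f k) ≤ rhoPlus g f := by
  rw [rhoPlus_eq_mul_normRightDeriv, rhoPlus_eq_mul_normRightDeriv, hk]
  exact mul_le_mul_of_nonneg_left (normRightDeriv_apply_le g f hk) (norm_nonneg g)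

theorem exists_normRightDeriv_apply_eq [Nonempty K] (g f : C(K, X)) :
    ∃ k, ‖g k‖ = ‖g‖ ∧ normRightDeriv (g k) (f k) = normRightDeriv g f := by
  set D := normRightDeriv g f
  choose κ hκ using fun t : ℝ => exists_norm_apply_eq_norm (g + t • f)
  obtain ⟨k, -, hk⟩ := isCompact_univ.exists_mapClusterPt (f := 𝓝[>] (0 : ℝ)) (u := κ) (by simp)
  have hslope : ∀ s, 0 < s → D ≤ (‖g k + s • f k‖ - ‖g‖) / s := by
    intro s hs
    have hcont : Continuous fun k => (‖g k + s • f k‖ - ‖g‖) / s := by fun_prop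
    refine (isClosed_le continuous_const hcont).mem_of_mapClusterPt hk ?_
    filter_upwards [Ioo_mem_nhdsGT hs] with t ⟨ht, hts⟩
    calc D ≤ normSlope g f t := normRightDeriv_le_normSlope g f ht
      _ = (‖g (κ t) + t • f (κ t)‖ - ‖g‖) / t := by rw [normSlope, ← hκ t]; rfl
      _ ≤ (‖g (κ t) + s • f (κ t)‖ - ‖g‖) / s :=
        monotoneOn_norm_add_smul_sub_div (g.norm_coe_le_norm _) _ ht hs hts.le
  have hnorm : ‖g k‖ = ‖g‖ := by
    refine le_antisymm (g.norm_coe_le_norm k) ?_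
    -- `‖g‖ - ‖g k‖ ≤ s * (‖f‖ - D)` for every `s > 0`
    have hlim : Tendsto (fun s : ℝ => ‖g k‖ + s * (‖f‖ - D)) (𝓝[>] 0) (𝓝 ‖g k‖) := by
      have hcont : Continuous fun s : ℝ => ‖g k‖ + s * (‖f‖ - D) := by fun_prop
      simpa using tendsto_nhdsWithin_of_tendsto_nhds (hcont.tendsto 0)
    refine ge_of_tendsto hlim ?_
    filter_upwards [self_mem_nhdsWithin] with s (hs : 0 < s)
    have h := hslope s hs
    rw [le_div_iff₀ hs] at h
    have hfk : ‖s • f k‖ ≤ s * ‖f‖ := by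
      rw [norm_smul, Real.norm_of_nonneg hs.le]
      exact mul_le_mul_of_nonneg_left (f.norm_coe_le_norm k) hs.le
    nlinarith [norm_add_le (g k) (s • f k)]
  refine ⟨k, hnorm, le_antisymm (normRightDeriv_apply_le g f hnorm) ?_⟩
  exact le_normRightDeriv _ _ fun s hs => by simpa [normSlope, hnorm] using hslope s hs

theorem exists_rhoPlus_apply_eq [Nonempty K] (g f : C(K, X)) :
    ∃ k, ‖g k‖ = ‖g‖ ∧ rhoPlus (g k) (f k) = rhoPlus g f := by
  obtain ⟨k, hk, hD⟩ := exists_normRightDeriv_apply_eq g f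
  exact ⟨k, hk, by rw [rhoPlus_eq_mul_normRightDeriv, rhoPlus_eq_mul_normRightDeriv, hk, hD]⟩

theorem rhoPlus_eq_rhoPlus_apply {g : C(K, X)} {k₀ : K} (hg : ∀ k, ‖g k‖ = ‖g‖ → k = k₀)
    (f : C(K, X)) : rhoPlus g f = rhoPlus (g k₀) (f k₀) := by
  have : Nonempty K := ⟨k₀⟩
  obtain ⟨k, hk, h⟩ := exists_rhoPlus_apply_eq g f
  obtain rfl := hg k hk
  exact h.symm

end ContinuousMap

section PerfectlyNormal

variable {K X : Type*} [TopologicalSpace K] [CompactSpace K] [T2Space K]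
  [PerfectlyNormalSpace K] [NormedAddCommGroup X] [NormedSpace ℝ X]

theorem exists_continuous_preimage_one_eq_singleton (k : K) {A : Set K} (hA : IsOpen A)
    (hk : k ∈ A) :
    ∃ u : C(K, ℝ), u ⁻¹' {1} = {k} ∧ EqOn u 0 Aᶜ ∧ ∀ x, u x ∈ Icc (0 : ℝ) 1 := by
  obtain ⟨u, hu1, hu0, -, hu⟩ := exists_continuous_one_zero_of_isCompact_of_isGδ
    isCompact_singleton isClosed_singleton.isGδ hA.isClosed_compl
    (disjoint_singleton_left.2 (not_not_intro hk))
  exact ⟨u, hu1.symm, hu0, hu⟩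

namespace ContinuousMap

theorem exists_apply_eq_and_norm_lt (k : K) {y : X} (hy : y ≠ 0) {A : Set K} (hA : IsOpen A)
    (hk : k ∈ A) :
    ∃ g : C(K, X), g k = y ∧ (∀ k' ≠ k, ‖g k'‖ < ‖y‖) ∧ EqOn g 0 Aᶜ := by
  obtain ⟨u, hu1, hu0, hu⟩ := exists_continuous_preimage_one_eq_singleton k hA hk
  have huk : u k = 1 := (hu1.symm ▸ rfl : k ∈ u ⁻¹' {1})
  refine ⟨⟨fun x => u x • y, by fun_prop⟩, by simp [huk], fun k' hk' => ?_, fun x hx => ?_⟩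
  · have hlt : u k' < 1 := (hu k').2.lt_of_ne fun h =>
      hk' (by rw [← mem_singleton_iff, ← hu1]; exact h)
    rw [coe_mk, norm_smul, Real.norm_of_nonneg (hu k').1]
    exact mul_lt_of_lt_one_left (norm_pos_iff.2 hy) hlt
  · simp [hu0 hx]

theorem exists_apply_eq_and_norm_lt_and_apply_eq_smul {k k₁ : K} (hk : k ≠ k₁) {y : X}
    (hy : y ≠ 0) (f : C(K, X)) :
    ∃ g : C(K, X), ∃ c : ℝ, 0 < c ∧ g k = y ∧ (∀ k' ≠ k, ‖g k'‖ < ‖y‖) ∧ g k₁ = c • f k₁ := by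
  obtain ⟨A, B, hA, hB, hkA, hk₁B, hAB⟩ := t2_separation hk
  obtain ⟨g₀, hg₀k, hg₀lt, hg₀A⟩ := exists_apply_eq_and_norm_lt k hy hA hkA
  obtain ⟨v, hv1, hvB, hv⟩ := exists_continuous_preimage_one_eq_singleton k₁ hB hk₁B
  have hvA : ∀ x ∈ A, v x = 0 := fun x hx => hvB (hAB.subset_compl_right hx)
  have hvk₁ : v k₁ = 1 := (hv1.symm ▸ rfl : k₁ ∈ v ⁻¹' {1})
  set c := ‖y‖ / (‖f‖ + 1)
  have hc : 0 < c := div_pos (norm_pos_iff.2 hy) (by positivity)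
  have hcf : ∀ x, c * ‖f x‖ < ‖y‖ := fun x =>
    calc c * ‖f x‖ ≤ c * ‖f‖ := mul_le_mul_of_nonneg_left (f.norm_coe_le_norm x) hc.le
      _ < c * (‖f‖ + 1) := by gcongr; linarith
      _ = ‖y‖ := div_mul_cancel₀ _ (by positivity)
  refine ⟨g₀ + ⟨fun x => (c * v x) • f x, by fun_prop⟩, c, hc, ?_, fun k' hk' => ?_, ?_⟩
  · simp [hg₀k, hvA k hkA]
  · by_cases hk'A : k' ∈ A
    · simpa [hvA k' hk'A] using hg₀lt k' hk'
    · rw [add_apply, hg₀A hk'A, Pi.zero_apply, zero_add, coe_mk, norm_smul,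
        Real.norm_of_nonneg (mul_nonneg hc.le (hv k').1)]
      calc c * v k' * ‖f k'‖ ≤ c * ‖f k'‖ := by
            gcongr
            · exact mul_le_of_le_one_right hc.le (hv k').2
        _ < ‖y‖ := hcf k'
  · have hk₁A : k₁ ∉ A := hAB.subset_compl_left hk₁B
    simp [hg₀A hk₁A, hvk₁]

end ContinuousMap

open ContinuousMap

theorem IsRhoPlusRightSymmetric.eq_zero_of_rhoPlus_eq_zero {f : C(K, X)}
    (hf : IsRhoPlusRightSymmetric f) (hf0 : f ≠ 0) {k k₁ : K} (hk₁ : ‖f k₁‖ = ‖f‖)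
    (hk : k ≠ k₁) (w : X) (hw : rhoPlus w (f k) = 0) : w = 0 := by
  by_contra hw0
  obtain ⟨g, c, hc, hgk, hglt, hgk₁⟩ := exists_apply_eq_and_norm_lt_and_apply_eq_smul hk hw0 f
  have hgf : rhoPlus g f = 0 := by
    rw [rhoPlus_eq_rhoPlus_apply (fun k' => eq_of_norm_apply_eq_norm (hgk ▸ hglt)), hgk, hw]
  have hpos : 0 < rhoPlus (f k₁) (g k₁) := by
    rw [hgk₁, rhoPlus_smul_self _ hc.le, hk₁]
    have := norm_pos_iff.2 hf0
    positivity
  exact (hpos.trans_le (rhoPlus_apply_le f g hk₁)).ne' (hf g hgf)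

theorem IsRhoPlusRightSymmetric.apply {f : C(K, X)} (hf : IsRhoPlusRightSymmetric f) {k₀ : K}
    (hk₀ : ∀ k, ‖f k‖ = ‖f‖ → k = k₀) : IsRhoPlusRightSymmetric (f k₀) := by
  intro y hy
  rcases eq_or_ne y 0 with rfl | hy0
  · exact rhoPlus_zero_right _
  obtain ⟨g, hgk, hglt, -⟩ := exists_apply_eq_and_norm_lt k₀ hy0 isOpen_univ (mem_univ _)
  have hgf : rhoPlus g f = 0 := by
    rw [rhoPlus_eq_rhoPlus_apply (fun k' => eq_of_norm_apply_eq_norm (hgk ▸ hglt)), hgk, hy]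
  rw [← hgk, ← rhoPlus_eq_rhoPlus_apply hk₀]
  exact hf g hgf

end PerfectlyNormal

theorem stmt13_general {K X : Type*} [TopologicalSpace K] [CompactSpace K] [T2Space K]
    [PerfectlyNormalSpace K]
    [NormedAddCommGroup X] [NormedSpace ℝ X]
    (f : C(K, X)) (hf : ‖f‖ = 1) :
    (∀ g : C(K, X), rhoPlus g f = 0 → rhoPlus f g = 0) ↔
      ((∃ k₀ : K, {k : K | ‖f k‖ = ‖f‖} = {k₀} ∧
          (∀ y : X, rhoPlus y (f k₀) = 0 → rhoPlus (f k₀) y = 0) ∧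
          (∀ k : K, k ≠ k₀ → ∀ w : X, rhoPlus w (f k) = 0 → w = 0)) ∨
        ((∃ k₁ k₂ : K, k₁ ≠ k₂ ∧ ‖f k₁‖ = ‖f‖ ∧ ‖f k₂‖ = ‖f‖) ∧
          (∀ k : K, ∀ w : X, rhoPlus w (f k) = 0 → w = 0))) := by
  have hf0 : f ≠ 0 := by rintro rfl; simp at hf
  have : Nonempty K := not_isEmpty_iff.1 fun _ => hf0 (Subsingleton.elim f 0)
  constructor
  · intro (hRS : IsRhoPlusRightSymmetric f)
    obtain ⟨k₀, hk₀⟩ := ContinuousMap.exists_norm_apply_eq_norm f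
    by_cases htwo : ∃ k₁, ‖f k₁‖ = ‖f‖ ∧ k₁ ≠ k₀
    · obtain ⟨k₁, hk₁, hne⟩ := htwo
      refine Or.inr ⟨⟨k₁, k₀, hne, hk₁, hk₀⟩, fun k => ?_⟩
      rcases eq_or_ne k k₀ with rfl | hk
      · exact hRS.eq_zero_of_rhoPlus_eq_zero hf0 hk₁ hne.symm
      · exact hRS.eq_zero_of_rhoPlus_eq_zero hf0 hk₀ hk
    · push Not at htwo
      refine Or.inl ⟨k₀, ?_, hRS.apply htwo, fun k hk => hRS.eq_zero_of_rhoPlus_eq_zero hf0 hk₀ hk⟩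
      exact Subset.antisymm htwo (singleton_subset_iff.2 hk₀)
  · intro h g hg
    obtain ⟨k, hk, hρ⟩ := ContinuousMap.exists_rhoPlus_apply_eq g f
    rw [hg] at hρ
    rcases eq_or_ne (g k) 0 with hgk | hgk
    · rw [norm_eq_zero.1 (by rw [← hk, hgk, norm_zero] : ‖g‖ = 0), rhoPlus_zero_right]
    rcases h with ⟨k₀, hM, hsym, hoth⟩ | ⟨-, hall⟩
    · obtain rfl : k = k₀ := by_contra fun hne => hgk (hoth k hne _ hρ)
      rw [ContinuousMap.rhoPlus_eq_rhoPlus_apply fun k' hk' => hM.subset hk']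
      exact hsym _ hρ
    · exact absurd (hall k _ hρ) hgk

theorem stmt13 {K X : Type*} [TopologicalSpace K] [CompactSpace K] [T2Space K]
    [PerfectlyNormalSpace K]
    [NormedAddCommGroup X] [NormedSpace ℝ X] [CompleteSpace X]
    (f : C(K, X)) (hf : ‖f‖ = 1) :
    (∀ g : C(K, X), rhoPlus g f = 0 → rhoPlus f g = 0) ↔
      ((∃ k₀ : K, {k : K | ‖f k‖ = ‖f‖} = {k₀} ∧
          (∀ y : X, rhoPlus y (f k₀) = 0 → rhoPlus (f k₀) y = 0) ∧
          (∀ k : K, k ≠ k₀ → ∀ w : X, rhoPlus w (f k) = 0 → w = 0)) ∨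
        ((∃ k₁ k₂ : K, k₁ ≠ k₂ ∧ ‖f k₁‖ = ‖f‖ ∧ ‖f k₂‖ = ‖f‖) ∧
          (∀ k : K, ∀ w : X, rhoPlus w (f k) = 0 → w = 0))) :=
  stmt13_general f hf
end
end
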